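/- Assume F has no ties, so that Pr(T = X_{k:n}) = φ^q_{n−k+1} − φ^q_{n−k} where φ^q_k = ∑_{|x|=k} q(x) φ(x). Then the equalities Pr(T = X_{k:n}) = φ_{n−k+1} − φ_{n−k} (with φ_k = C(n,k)^{-1} ∑_{|x|=k} φ(x)) hold for all k ∈ [n] and every nondecreasing φ : {0,1}^n → {0,1} with φ(0)=0, φ(1)=1, if and only if q(x) = 1/C(n,|x|) for every x ∈ {0,1}^n with x ≠ 0 and x ≠ 1 (i.e., q is symmetric). -/

import Mathlib

/-!
Both sides of the identities are built from the level sums `∑_{|x| = j} w x φ x`, for the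
weights `w = q` and `w = C(n, |x|)⁻¹`. These telescope: since `φ 0 = 0`, the identities for
all `k` say exactly that the two level sums agree at every level. If `q` is symmetric the
level sums agree term by term (`q 1 = 1` because the event defining it is sure). Conversely,
for a state `x ∉ {0, 1}` the semicoherent structure function that is `1` above the level of
`x` and, on that level, only at `x` has level sums `q x` and `C(n, |x|)⁻¹` at level `|x|`.
-/

open Finset MeasureTheory
open scoped ProbabilityTheory

lemma eq_of_forall_lt_sub_eq {G : Type*} [AddGroup G] {f g : ℕ → G} {n : ℕ} (h0 : f 0 = g 0)
    (h : ∀ j < n, f (j + 1) - f j = g (j + 1) - g j) {j : ℕ} (hj : j ≤ n) : f j = g j := by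
  induction j with
  | zero => exact h0
  | succ j ih =>
    rw [← sub_add_cancel (f (j + 1)) (f j), h j hj, ih (by omega), sub_add_cancel]

section Levels

variable {ι : Type*} [Fintype ι]

def weight (x : ι → Bool) : ℕ := #{i | x i = true}

lemma weight_le_card (x : ι → Bool) : weight x ≤ Fintype.card ι := card_filter_le _ _

lemma weight_top : weight (⊤ : ι → Bool) = Fintype.card ι := by
  simp [weight]

lemma filter_subset_filter_of_le {x y : ι → Bool} (hxy : x ≤ y) :
    univ.filter (fun i => x i = true) ⊆ univ.filter fun i => y i = true := by
  intro i
  simpa using Bool.le_iff_imp.mp (hxy i)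

lemma weight_mono : Monotone (weight : (ι → Bool) → ℕ) :=
  fun _ _ hxy => card_le_card (filter_subset_filter_of_le hxy)

lemma eq_of_le_of_weight_le {x y : ι → Bool} (hxy : x ≤ y) (h : weight y ≤ weight x) :
    x = y := by
  have hsets := eq_of_subset_of_card_le (filter_subset_filter_of_le hxy) h
  funext i
  simpa using congrArg (i ∈ ·) hsets

def upperLevelsWith (x y : ι → Bool) : Bool := decide (weight x < weight y ∨ y = x)

lemma monotone_upperLevelsWith (x : ι → Bool) : Monotone (upperLevelsWith x) := by
  intro y y' hyy'
  simp only [upperLevelsWith, Bool.le_iff_imp, decide_eq_true_eq]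
  rintro (hlt | rfl)
  · exact Or.inl (hlt.trans_le (weight_mono hyy'))
  · by_cases hle : weight y' ≤ weight y
    · exact Or.inr (eq_of_le_of_weight_le hyy' hle).symm
    · exact Or.inl (not_le.mp hle)

lemma upperLevelsWith_bot {x : ι → Bool} (hx : x ≠ ⊥) : upperLevelsWith x ⊥ = false := by
  simpa [upperLevelsWith] using ⟨weight_mono bot_le, Ne.symm hx⟩

lemma upperLevelsWith_top {x : ι → Bool} (hx : x ≠ ⊤) : upperLevelsWith x ⊤ = true := by
  simpa [upperLevelsWith] using Or.inl fun hle => hx (eq_of_le_of_weight_le le_top hle)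

variable [DecidableEq ι]

noncomputable def levelSum (w : (ι → Bool) → ℝ) (φ : (ι → Bool) → Bool) (j : ℕ) : ℝ :=
  ∑ x with weight x = j, w x * if φ x then 1 else 0

variable {w w' : (ι → Bool) → ℝ} {φ : (ι → Bool) → Bool}

lemma levelSum_zero_of_bot (h0 : φ ⊥ = false) : levelSum w φ 0 = 0 := by
  refine sum_eq_zero fun x hx => ?_
  have hweight : weight x ≤ weight (⊥ : ι → Bool) := (mem_filter.mp hx).2.trans_le (Nat.zero_le _)
  have hx : x = ⊥ := (eq_of_le_of_weight_le bot_le hweight).symm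
  simp [hx, h0]

lemma levelSum_congr (h : ∀ x, φ x = true → w x = w' x) (j : ℕ) :
    levelSum w φ j = levelSum w' φ j :=
  sum_congr rfl fun x _ => by by_cases hx : φ x <;> simp [hx, h x]

lemma levelSum_comp_weight (c : ℕ → ℝ) (j : ℕ) :
    levelSum (fun x => c (weight x)) φ j =
      c j * ∑ x with weight x = j, if φ x then 1 else 0 := by
  rw [levelSum, mul_sum]
  exact sum_congr rfl fun x hx => by rw [(mem_filter.mp hx).2]

lemma levelSum_eq_of_forall_sub_eq {n : ℕ} (h0 : φ ⊥ = false)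
    (h : ∀ k ∈ Icc 1 n, levelSum w φ (n - k + 1) - levelSum w φ (n - k) =
      levelSum w' φ (n - k + 1) - levelSum w' φ (n - k))
    {j : ℕ} (hj : j ≤ n) : levelSum w φ j = levelSum w' φ j := by
  refine eq_of_forall_lt_sub_eq (by rw [levelSum_zero_of_bot h0, levelSum_zero_of_bot h0])
    (fun i hi => ?_) hj
  have hk := h (n - i) (mem_Icc.mpr ⟨by omega, by omega⟩)
  rwa [Nat.sub_sub_self hi.le] at hk

lemma levelSum_upperLevelsWith (x : ι → Bool) :
    levelSum w (upperLevelsWith x) (weight x) = w x := by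
  rw [levelSum, sum_eq_single_of_mem x (by simp)]
  · simp [upperLevelsWith]
  · intro y hy hyx
    simp [upperLevelsWith, (mem_filter.mp hy).2, hyx]

lemma eq_of_forall_levelSum_eq {x : ι → Bool} (hx0 : x ≠ ⊥) (hx1 : x ≠ ⊤)
    (h : ∀ φ : (ι → Bool) → Bool, Monotone φ → φ ⊥ = false → φ ⊤ = true →
      levelSum w φ (weight x) = levelSum w' φ (weight x)) :
    w x = w' x := by
  simpa only [levelSum_upperLevelsWith] using
    h _ (monotone_upperLevelsWith x) (upperLevelsWith_bot hx0) (upperLevelsWith_top hx1)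

end Levels

theorem stmt_14_general (n : ℕ)
    {Ω : Type*} [MeasureSpace Ω] [IsProbabilityMeasure (ℙ : Measure Ω)]
    (X : Fin n → Ω → ℝ)
    (q : (Fin n → Bool) → ℝ)
    (hq : ∀ x, q x =
      (ℙ {ω | ∀ i, x i = false → ∀ j, x j = true → X i ω < X j ω}).toReal)
    (PT : ((Fin n → Bool) → Bool) → ℕ → ℝ)
    (hPT : ∀ φ : (Fin n → Bool) → Bool,
      (∀ x y : Fin n → Bool, (∀ i, x i ≤ y i) → φ x ≤ φ y) →
      φ (fun _ => false) = false → φ (fun _ => true) = true →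
      ∀ k ∈ Finset.Icc 1 n,
        PT φ k =
          (∑ x ∈ Finset.univ.filter
              (fun x : Fin n → Bool =>
                (Finset.univ.filter fun i => x i = true).card = n - k + 1),
            q x * (if φ x then (1 : ℝ) else 0)) -
          (∑ x ∈ Finset.univ.filter
              (fun x : Fin n → Bool =>
                (Finset.univ.filter fun i => x i = true).card = n - k),
            q x * (if φ x then (1 : ℝ) else 0))) :
    (∀ φ : (Fin n → Bool) → Bool,
      (∀ x y : Fin n → Bool, (∀ i, x i ≤ y i) → φ x ≤ φ y) →
      φ (fun _ => false) = false → φ (fun _ => true) = true →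
      ∀ k ∈ Finset.Icc 1 n,
        PT φ k =
          ((n.choose (n - k + 1) : ℝ))⁻¹ *
            (∑ x ∈ Finset.univ.filter
                (fun x : Fin n → Bool =>
                  (Finset.univ.filter fun i => x i = true).card = n - k + 1),
              (if φ x then (1 : ℝ) else 0)) -
          ((n.choose (n - k) : ℝ))⁻¹ *
            (∑ x ∈ Finset.univ.filter
                (fun x : Fin n → Bool =>
                  (Finset.univ.filter fun i => x i = true).card = n - k),
              (if φ x then (1 : ℝ) else 0))) ↔
    (∀ x : Fin n → Bool, x ≠ (fun _ => false) → x ≠ (fun _ => true) →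
      q x = 1 / (n.choose ((Finset.univ.filter fun i => x i = true).card) : ℝ)) := by
  set c : ℕ → ℝ := fun j => ((n.choose j : ℝ))⁻¹
  constructor
  · intro H x hx0 hx1
    rw [one_div]
    refine eq_of_forall_levelSum_eq (w' := fun y => c (weight y)) hx0 hx1 fun φ hφ h0 h1 => ?_
    have hx_le : weight x ≤ n := (weight_le_card x).trans_eq (Fintype.card_fin n)
    refine levelSum_eq_of_forall_sub_eq h0 (fun k hk => ?_) hx_le
    rw [levelSum_comp_weight, levelSum_comp_weight]
    exact (hPT φ (fun _ _ h => hφ h) h0 h1 k hk).symm.trans (H φ (fun _ _ h => hφ h) h0 h1 k hk)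
  · intro hsym φ hφ h0 h1 k hk
    have hq_top : q ⊤ = 1 := by simp [hq]
    have hlevels (j : ℕ) : levelSum q φ j = levelSum (fun y => c (weight y)) φ j := by
      refine levelSum_congr (fun x hx => ?_) j
      by_cases hx1 : x = ⊤
      · simp [hx1, hq_top, c, weight_top]
      · have hx0 : x ≠ ⊥ := by rintro rfl; exact Bool.false_ne_true (h0.symm.trans hx)
        exact (hsym x hx0 hx1).trans (one_div _)
    simp only [levelSum_comp_weight] at hlevels
    rw [hPT φ hφ h0 h1 k hk]
    exact congrArg₂ (· - ·) (hlevels _) (hlevels _)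

/-- Assume no ties, and take as given the formula `Pr(T = X_{k:n}) = φ^q_{n-k+1} - φ^q_{n-k}`
with `φ^q_j = ∑_{|x|=j} q(x) φ(x)` and `q` the relative quality function (identified with a
function on `{0,1}^n`). Then `Pr(T = X_{k:n}) = φ_{n-k+1} - φ_{n-k}` (with
`φ_j = C(n,j)⁻¹ ∑_{|x|=j} φ(x)`) holds for all `k ∈ [n]` and every semicoherent structure
function `φ` iff `q(x) = 1 / C(n,|x|)` for every `x ∉ {0, 1}`, i.e. `q` is symmetric. -/
theorem stmt_14 (n : ℕ) (hn : 2 ≤ n)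
    {Ω : Type*} [MeasureSpace Ω] [IsProbabilityMeasure (ℙ : Measure Ω)]
    (X : Fin n → Ω → ℝ) (hX : ∀ i, Measurable (X i))
    (hnoties : ∀ i j : Fin n, i ≠ j → ℙ {ω | X i ω = X j ω} = 0)
    (q : (Fin n → Bool) → ℝ)
    (hq : ∀ x, q x =
      (ℙ {ω | ∀ i, x i = false → ∀ j, x j = true → X i ω < X j ω}).toReal)
    (PT : ((Fin n → Bool) → Bool) → ℕ → ℝ)
    (hPT : ∀ φ : (Fin n → Bool) → Bool,
      (∀ x y : Fin n → Bool, (∀ i, x i ≤ y i) → φ x ≤ φ y) →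
      φ (fun _ => false) = false → φ (fun _ => true) = true →
      ∀ k ∈ Finset.Icc 1 n,
        PT φ k =
          (∑ x ∈ Finset.univ.filter
              (fun x : Fin n → Bool =>
                (Finset.univ.filter fun i => x i = true).card = n - k + 1),
            q x * (if φ x then (1 : ℝ) else 0)) -
          (∑ x ∈ Finset.univ.filter
              (fun x : Fin n → Bool =>
                (Finset.univ.filter fun i => x i = true).card = n - k),
            q x * (if φ x then (1 : ℝ) else 0))) :
    (∀ φ : (Fin n → Bool) → Bool,
      (∀ x y : Fin n → Bool, (∀ i, x i ≤ y i) → φ x ≤ φ y) →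
      φ (fun _ => false) = false → φ (fun _ => true) = true →
      ∀ k ∈ Finset.Icc 1 n,
        PT φ k =
          ((n.choose (n - k + 1) : ℝ))⁻¹ *
            (∑ x ∈ Finset.univ.filter
                (fun x : Fin n → Bool =>
                  (Finset.univ.filter fun i => x i = true).card = n - k + 1),
              (if φ x then (1 : ℝ) else 0)) -
          ((n.choose (n - k) : ℝ))⁻¹ *
            (∑ x ∈ Finset.univ.filter
                (fun x : Fin n → Bool =>
                  (Finset.univ.filter fun i => x i = true).card = n - k),
              (if φ x then (1 : ℝ) else 0))) ↔
    (∀ x : Fin n → Bool, x ≠ (fun _ => false) → x ≠ (fun _ => true) →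
      q x = 1 / (n.choose ((Finset.univ.filter fun i => x i = true).card) : ℝ)) :=
  stmt_14_general n X q hq PT hPT
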